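/- Let Λ ∈ ℝ^{d×d} be diagonal with positive entries and M symmetric positive semidefinite with M ⪰ b²·I for some b > 0. Then the solution Q of the Lyapunov equation ΛQ + QΛ = M satisfies Q ⪰ (b²/2)·Λ⁻¹. -/

import Mathlib

/-!
Put `R = Q - (b²/2) Λ⁻¹`; then `ΛR + RΛ = M - b² I ⪰ 0`. Entrywise, the solution of `ΛX + XΛ = N`
is `X = N ⊙ C` with the Cauchy matrix `C i j = 1/(λᵢ + λⱼ)`, and `C` is positive semidefinite
because it is the Gram matrix of the functions `t ↦ exp (-λᵢ t)` in `L²(0, ∞)`. The Schur product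
theorem therefore gives `R ⪰ 0`.
-/

open Matrix MeasureTheory Set Real

variable {ι : Type*}

theorem Matrix.posSemidef_integral_mul [Fintype ι] {α : Type*} [MeasurableSpace α]
    {μ : Measure α} (g : ι → α → ℝ) (hg : ∀ i j, Integrable (fun a ↦ g i a * g j a) μ) :
    (of fun i j ↦ ∫ a, g i a * g j a ∂μ).PosSemidef := by
  refine .of_dotProduct_mulVec_nonneg ?_ fun x ↦ ?_
  · ext i j
    simp [mul_comm]
  have hint : ∀ i j, Integrable (fun a ↦ x i * x j * (g i a * g j a)) μ :=
    fun i j ↦ (hg i j).const_mul _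
  have hquad : star x ⬝ᵥ (of fun i j ↦ ∫ a, g i a * g j a ∂μ) *ᵥ x
      = ∫ a, (∑ i, x i * g i a) ^ 2 ∂μ := calc
    _ = ∑ i, ∑ j, ∫ a, x i * x j * (g i a * g j a) ∂μ := by
      simp only [dotProduct, mulVec, star_trivial, of_apply, integral_const_mul, Finset.mul_sum]
      exact Finset.sum_congr rfl fun i _ ↦ Finset.sum_congr rfl fun j _ ↦ by ring
    _ = ∫ a, ∑ i, ∑ j, x i * x j * (g i a * g j a) ∂μ := by
      rw [integral_finsetSum _ fun i _ ↦ integrable_finsetSum _ fun j _ ↦ hint i j]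
      exact Finset.sum_congr rfl fun i _ ↦ (integral_finsetSum _ fun j _ ↦ hint i j).symm
    _ = ∫ a, (∑ i, x i * g i a) ^ 2 ∂μ := by
      simp only [sq, Finset.sum_mul_sum]
      exact integral_congr_ae <| .of_forall fun a ↦
        Finset.sum_congr rfl fun i _ ↦ Finset.sum_congr rfl fun j _ ↦ by ring
  rw [hquad]
  exact integral_nonneg fun a ↦ sq_nonneg _

theorem integral_exp_neg_mul_Ioi_zero {c : ℝ} (hc : 0 < c) :
    ∫ t in Ioi (0 : ℝ), exp (-c * t) = c⁻¹ := by
  rw [integral_exp_mul_Ioi (neg_neg_of_pos hc), mul_zero, exp_zero, neg_div_neg_eq, one_div]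

noncomputable def cauchyMatrix (lam : ι → ℝ) : Matrix ι ι ℝ :=
  of fun i j ↦ (lam i + lam j)⁻¹

theorem cauchyMatrix_eq_integral {lam : ι → ℝ} (hlam : ∀ i, 0 < lam i) :
    cauchyMatrix lam = of fun i j ↦ ∫ t in Ioi (0 : ℝ), exp (-lam i * t) * exp (-lam j * t) := by
  ext i j
  simp only [cauchyMatrix, of_apply, ← exp_add, ← add_mul, ← neg_add]
  rw [integral_exp_neg_mul_Ioi_zero (add_pos (hlam i) (hlam j))]

theorem posSemidef_cauchyMatrix [Fintype ι] {lam : ι → ℝ} (hlam : ∀ i, 0 < lam i) :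
    (cauchyMatrix lam).PosSemidef := by
  rw [cauchyMatrix_eq_integral hlam]
  refine posSemidef_integral_mul _ fun i j ↦ ?_
  simp only [← exp_add, ← add_mul, ← neg_add]
  exact exp_neg_integrableOn_Ioi 0 (add_pos (hlam i) (hlam j))

section Lyapunov

variable [Fintype ι] [DecidableEq ι] {lam : ι → ℝ} {X N : Matrix ι ι ℝ}

theorem Matrix.eq_hadamard_cauchyMatrix_of_diagonal_mul_add_mul_diagonal
    (hlam : ∀ i, 0 < lam i) (hX : diagonal lam * X + X * diagonal lam = N) :
    X = N ⊙ cauchyMatrix lam := by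
  ext i j
  have hij := congr_fun₂ hX i j
  simp only [add_apply, diagonal_mul, mul_diagonal] at hij
  rw [hadamard_apply, cauchyMatrix, of_apply, ← hij, ← div_eq_mul_inv,
    eq_div_iff (add_pos (hlam i) (hlam j)).ne']
  ring

theorem Matrix.PosSemidef.of_diagonal_mul_add_mul_diagonal (hlam : ∀ i, 0 < lam i)
    (hN : N.PosSemidef) (hX : diagonal lam * X + X * diagonal lam = N) : X.PosSemidef := by
  rw [eq_hadamard_cauchyMatrix_of_diagonal_mul_add_mul_diagonal hlam hX]
  exact hN.hadamard (posSemidef_cauchyMatrix hlam)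

end Lyapunov

theorem stmt_2_general (d : ℕ) (lam : Fin d → ℝ) (hlam : ∀ i, 0 < lam i)
    (M Q : Matrix (Fin d) (Fin d) ℝ)
    (b : ℝ)
    (hMb : (M - b^2 • (1 : Matrix (Fin d) (Fin d) ℝ)).PosSemidef)
    (hQ : Matrix.diagonal lam * Q + Q * Matrix.diagonal lam = M) :
    (Q - (b^2/2) • (Matrix.diagonal lam)⁻¹).PosSemidef := by
  refine hMb.of_diagonal_mul_add_mul_diagonal hlam ?_
  have hdet : IsUnit (diagonal lam).det := by
    simp [det_diagonal, Finset.prod_ne_zero_iff, (hlam _).ne']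
  rw [mul_sub, sub_mul, mul_smul_comm, smul_mul_assoc, mul_nonsing_inv _ hdet,
    nonsing_inv_mul _ hdet, ← hQ]
  module

/-- If `Λ` is diagonal with positive entries, `M ⪰ b²·I` is symmetric psd, and `Q`
solves `ΛQ + QΛ = M`, then `Q ⪰ (b²/2)·Λ⁻¹`. -/
theorem stmt_2 (d : ℕ) (lam : Fin d → ℝ) (hlam : ∀ i, 0 < lam i)
    (M Q : Matrix (Fin d) (Fin d) ℝ) (hM : M.IsSymm) (hMpsd : M.PosSemidef)
    (b : ℝ) (hb : 0 < b)
    (hMb : (M - b^2 • (1 : Matrix (Fin d) (Fin d) ℝ)).PosSemidef)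
    (hQ : Matrix.diagonal lam * Q + Q * Matrix.diagonal lam = M) :
    (Q - (b^2/2) • (Matrix.diagonal lam)⁻¹).PosSemidef :=
  stmt_2_general d lam hlam M Q b hMb hQ
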